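/- arXiv:2405.20190 — 4 statements merged into one kernel-verified Lean document; each statement's English description precedes it below -/
import Mathlib

section
/- Let K be an algebraically closed field of characteristic zero, let k ≥ 2 and n ≥ 1. Let φ₁,…,φₙ ∈ K[t] be polynomials with φᵢ(0) = 0 for all i and such that for some index i the coefficient of t in φᵢ is nonzero. Let α ∈ K[t] with α(0) = 0. If t^k divides φᵢ(α(t)) − φᵢ(t) for every i = 1,…,n, then t^k divides α(t) − t. (In other words, the action of the reparameterization group R^k on smooth punctual k-jets by precomposition, (φ₁,…,φₙ)•α = (φ₁∘α,…,φₙ∘α) computed modulo t^k, is free.) -/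
open Polynomial

/-- freeness of the reparameterization action on smooth punctual `k`-jets.
If `φ₁,…,φₙ ∈ K[t]` vanish at `0`, some `φᵢ` has nonzero coefficient of `t`, `α ∈ K[t]`
vanishes at `0`, and `t^k ∣ φᵢ(α(t)) − φᵢ(t)` for every `i`, then `t^k ∣ α(t) − t`. -/
theorem reparam_action_free
    (K : Type*) [Field K] [IsAlgClosed K] [CharZero K]
    (n k : ℕ) (hn : 1 ≤ n) (hk : 2 ≤ k)
    (φ : Fin n → Polynomial K)
    (h0 : ∀ i, (φ i).coeff 0 = 0)
    (hsm : ∃ i, (φ i).coeff 1 ≠ 0)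
    (α : Polynomial K) (hα : α.coeff 0 = 0)
    (hdvd : ∀ i, (Polynomial.X : Polynomial K) ^ k ∣ (φ i).comp α - φ i) :
    (Polynomial.X : Polynomial K) ^ k ∣ α - Polynomial.X := by
  by_contra hnd
  obtain ⟨i, hi⟩ := hsm
  set β : Polynomial K := α - X with hβ
  have hβne : β ≠ 0 := by
    intro h; exact hnd (h ▸ dvd_zero _)
  -- β.coeff 0 = 0
  have hβ0 : β.coeff 0 = 0 := by
    simp [hβ, hα]
  set m : ℕ := β.natTrailingDegree with hm
  have hmk : m < k := by
    rw [X_pow_dvd_iff] at hnd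
    push_neg at hnd
    obtain ⟨d, hdk, hd⟩ := hnd
    exact lt_of_le_of_lt (natTrailingDegree_le_of_ne_zero hd) hdk
  have hm1 : 1 ≤ m := by
    by_contra h
    push_neg at h
    interval_cases m
    exact hβne (trailingCoeff_eq_zero.mp (by rwa [trailingCoeff, ← hm]))
  -- binomial expansion: (φ i).comp α = φ i + (derivative (φ i)) * β + c * β^2
  have key : ∃ c : Polynomial K,
      (φ i).comp α - φ i = (derivative (φ i)) * β + c * β ^ 2 := by
    obtain ⟨c, hc⟩ := Polynomial.binomExpansion ((φ i).map C) X β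
    refine ⟨c, ?_⟩
    have h1 : ((φ i).map C).eval (X + β) = (φ i).comp α := by
      have : X + β = α := by ring
      rw [this, eval_map, comp]
    have h2 : ((φ i).map C).eval X = φ i := by
      rw [eval_map, ← comp, comp_X]
    have h3 : (((φ i).map C).derivative).eval X = derivative (φ i) := by
      rw [derivative_map, eval_map, ← comp, comp_X]
    rw [h1, h2, h3] at hc
    rw [hc]; ring
  obtain ⟨c, hc⟩ := key
  -- derivative (φ i) has coeff 0 = (φ i).coeff 1 ≠ 0
  have hd0 : (derivative (φ i)).coeff 0 ≠ 0 := by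
    rw [coeff_derivative]
    simpa using hi
  have hdne : derivative (φ i) ≠ 0 := fun h => hd0 (by simp [h])
  have hdtd : (derivative (φ i)).natTrailingDegree = 0 :=
    Nat.le_zero.mp (natTrailingDegree_le_of_ne_zero hd0)
  -- coefficient m of the two pieces
  have hcoeff1 : ((derivative (φ i)) * β).coeff m ≠ 0 := by
    have htd : ((derivative (φ i)) * β).natTrailingDegree = m := by
      rw [natTrailingDegree_mul hdne hβne, hdtd, zero_add]
    have : ((derivative (φ i)) * β).trailingCoeff ≠ 0 :=
      fun h => (mul_ne_zero hdne hβne) (trailingCoeff_eq_zero.mp h)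
    rwa [trailingCoeff, htd] at this
  have hcoeff2 : (c * β ^ 2).coeff m = 0 := by
    rcases eq_or_ne c 0 with rfl | hcne
    · simp
    · apply coeff_eq_zero_of_lt_natTrailingDegree
      have : (c * β ^ 2).natTrailingDegree = c.natTrailingDegree + (m + m) := by
        rw [sq, ← mul_assoc, natTrailingDegree_mul (mul_ne_zero hcne hβne) hβne,
          natTrailingDegree_mul hcne hβne]
        ring
      omega
  have hzero : ((φ i).comp α - φ i).coeff m = 0 := by
    have := hdvd i
    rw [X_pow_dvd_iff] at this
    exact this m hmk
  rw [hc, coeff_add, hcoeff2, add_zero] at hzero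
  exact hcoeff1 hzero
end

section
/- Let K be an algebraically closed field of characteristic zero, let k ≥ 2 and n ≥ 1. Let φ₁,…,φₙ ∈ K[t] be polynomials with φᵢ(0) = 0 for all i and such that for some index i the coefficient of t in φᵢ is nonzero. Let α, β ∈ K[t] with α(0) = β(0) = 0. If t^k divides φᵢ(α(t)) − φᵢ(β(t)) for every i = 1,…,n, then t^k divides α(t) − β(t). (This is the injectivity of the map Ψ : S₀ᵏ(𝔸ⁿ) × R^k → S₀ᵏ(𝔸ⁿ) × S₀ᵏ(𝔸ⁿ), i.e. the reparameterization relating two jets in the same orbit is unique modulo t^k and depends algebraically on the two jets.) -/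
open Polynomial Finset

/-- injectivity of `Ψ : S₀ᵏ(𝔸ⁿ) × Rᵏ → S₀ᵏ(𝔸ⁿ) × S₀ᵏ(𝔸ⁿ)`.
If `φ₁,…,φₙ ∈ K[t]` vanish at `0`, some `φᵢ` has nonzero coefficient of `t`,
`α, β ∈ K[t]` vanish at `0`, and `t^k ∣ φᵢ(α(t)) − φᵢ(β(t))` for every `i`,
then `t^k ∣ α(t) − β(t)`. -/
theorem reparam_unique
    (K : Type*) [Field K] [IsAlgClosed K] [CharZero K]
    (n k : ℕ) (hn : 1 ≤ n) (hk : 2 ≤ k)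
    (φ : Fin n → Polynomial K)
    (h0 : ∀ i, (φ i).coeff 0 = 0)
    (hsm : ∃ i, (φ i).coeff 1 ≠ 0)
    (α β : Polynomial K) (hα : α.coeff 0 = 0) (hβ : β.coeff 0 = 0)
    (hdvd : ∀ i, (Polynomial.X : Polynomial K) ^ k ∣ (φ i).comp α - (φ i).comp β) :
    (Polynomial.X : Polynomial K) ^ k ∣ α - β := by
  obtain ⟨i, hc⟩ := hsm
  set p := φ i with hp
  have hdeg : 1 ≤ p.natDegree := le_natDegree_of_ne_zero hc
  set g : Polynomial K :=
    ∑ j ∈ Finset.range (p.natDegree + 1),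
      C (p.coeff j) * ∑ l ∈ Finset.range j, α ^ l * β ^ (j - 1 - l) with hg
  have key : p.comp α - p.comp β = g * (α - β) := by
    have hA : p.comp α = ∑ j ∈ Finset.range (p.natDegree + 1), C (p.coeff j) * α ^ j := by
      rw [comp, eval₂_eq_sum_range]
    have hB : p.comp β = ∑ j ∈ Finset.range (p.natDegree + 1), C (p.coeff j) * β ^ j := by
      rw [comp, eval₂_eq_sum_range]
    rw [hA, hB, ← Finset.sum_sub_distrib, hg, Finset.sum_mul]
    refine Finset.sum_congr rfl fun j _ => ?_
    rw [mul_assoc, geom_sum₂_mul, mul_sub]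
  have hg0 : g.eval 0 = p.coeff 1 := by
    have hα0 : α.eval 0 = 0 := by rw [← coeff_zero_eq_eval_zero]; exact hα
    have hβ0 : β.eval 0 = 0 := by rw [← coeff_zero_eq_eval_zero]; exact hβ
    rw [hg, eval_finset_sum]
    rw [Finset.sum_eq_single 1]
    · simp [hα0, hβ0]
    · intro j hj hj1
      rw [eval_mul, eval_finset_sum]
      rcases Nat.lt_or_ge j 1 with h | h
      · interval_cases j
        simp
      · have hj2 : 2 ≤ j := by omega
        have : ∀ l ∈ Finset.range j, (α ^ l * β ^ (j - 1 - l)).eval 0 = 0 := by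
          intro l hl
          rw [eval_mul, eval_pow, eval_pow, hα0, hβ0]
          rcases Nat.eq_zero_or_pos l with rfl | hl0
          · have : j - 1 - 0 ≠ 0 := by omega
            rw [zero_pow this]; ring
          · rw [zero_pow (by omega : l ≠ 0)]; ring
        rw [Finset.sum_eq_zero this, mul_zero]
    · intro h
      exact absurd (Finset.mem_range.mpr (by omega)) h
  have hXg : ¬ (X : Polynomial K) ∣ g := by
    rw [X_dvd_iff, coeff_zero_eq_eval_zero, hg0]
    exact hc
  have hdvd' : (X : Polynomial K) ^ k ∣ g * (α - β) := by
    rw [← key]; exact hdvd i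
  exact (Polynomial.prime_X (R := K)).pow_dvd_of_dvd_mul_left k hXg hdvd'
end

section
/- Let K be an algebraically closed field of characteristic zero and consider the cuspidal cubic f = y² − x³ ∈ K[x,y]. An ideal J of K[x,y] satisfies: y² − x³ ∈ J, the radical of J equals (x,y), dim_K K[x,y]/J = 3, and K[x,y]/J is isomorphic to K[t]/(t³) as a K-algebra, if and only if J = (y + λx², x³) for some λ ∈ K. (This is the classification CHilb³₀(C) = {(y + λx²)}_{λ∈K} for the cusp C, so that [CHilb³₀(C)] = 𝕃.) -/
open Polynomial

noncomputable section ChilbAux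

variable {K : Type*} [Field K]

local notation "Xv" => MvPolynomial.X
local notation "Cv" => MvPolynomial.C

/-- The ideal `(y + l x², x³)`. -/
def cuspIdeal (K : Type*) [Field K] (l : K) : Ideal (MvPolynomial (Fin 2) K) :=
  Ideal.span {MvPolynomial.X 1 + MvPolynomial.C l * MvPolynomial.X 0 ^ 2,
    MvPolynomial.X 0 ^ 3}

lemma gen1_mem (l : K) :
    MvPolynomial.X 1 + MvPolynomial.C l * MvPolynomial.X 0 ^ 2 ∈ cuspIdeal K l :=
  Ideal.subset_span (by simp)

lemma gen2_mem (l : K) :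
    (MvPolynomial.X 0 : MvPolynomial (Fin 2) K) ^ 3 ∈ cuspIdeal K l :=
  Ideal.subset_span (by simp)

lemma cusp_mem (l : K) :
    (MvPolynomial.X 1 ^ 2 - MvPolynomial.X 0 ^ 3 : MvPolynomial (Fin 2) K) ∈ cuspIdeal K l := by
  have h := Ideal.add_mem _
    (Ideal.mul_mem_left _ (Xv 1 - Cv l * Xv 0 ^ 2) (gen1_mem l))
    (Ideal.mul_mem_left _ (Cv l ^ 2 * Xv 0 - 1) (gen2_mem l))
  have heq : (Xv 1 - Cv l * Xv 0 ^ 2) * (Xv 1 + Cv l * Xv 0 ^ 2) +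
      (Cv l ^ 2 * Xv 0 - 1) * Xv 0 ^ 3
      = (Xv 1 ^ 2 - Xv 0 ^ 3 : MvPolynomial (Fin 2) K) := by ring
  rwa [heq] at h

/-! ### The truncated polynomial rings -/

local notation "Q3" => AdjoinRoot ((X : Polynomial K) ^ 3)
local notation "Q2" => AdjoinRoot ((X : Polynomial K) ^ 2)

lemma root3_pow : (AdjoinRoot.root ((X : Polynomial K) ^ 3)) ^ 3 = 0 := by
  have := AdjoinRoot.mk_self (f := (X : Polynomial K) ^ 3)
  rw [← AdjoinRoot.aeval_eq, map_pow, Polynomial.aeval_X] at this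
  exact this

lemma root2_pow : (AdjoinRoot.root ((X : Polynomial K) ^ 2)) ^ 2 = 0 := by
  have := AdjoinRoot.mk_self (f := (X : Polynomial K) ^ 2)
  rw [← AdjoinRoot.aeval_eq, map_pow, Polynomial.aeval_X] at this
  exact this

lemma root3_sq_ne : (AdjoinRoot.root ((X : Polynomial K) ^ 3)) ^ 2 ≠ 0 := by
  intro h
  have h1 : AdjoinRoot.mk ((X : Polynomial K) ^ 3) (X ^ 2) = 0 := by
    have := AdjoinRoot.aeval_eq (f := (X : Polynomial K) ^ 3) ((X : Polynomial K) ^ 2)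
    rw [map_pow, Polynomial.aeval_X] at this
    rw [← this, h]
  rw [AdjoinRoot.mk_eq_zero] at h1
  have h0 : ((X : Polynomial K) ^ 2) = 0 :=
    Polynomial.eq_zero_of_dvd_of_degree_lt h1 (by
      rw [degree_X_pow, degree_X_pow]; norm_num)
  simp at h0

lemma root2_not_scalar (a : K) :
    AdjoinRoot.root ((X : Polynomial K) ^ 2) ≠ algebraMap K Q2 a := by
  intro h
  have h1 : AdjoinRoot.mk ((X : Polynomial K) ^ 2) (X - Polynomial.C a) = 0 := by
    rw [map_sub, AdjoinRoot.mk_X, AdjoinRoot.mk_C, h, AdjoinRoot.algebraMap_eq, sub_self]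
  rw [AdjoinRoot.mk_eq_zero] at h1
  have h0 : ((X : Polynomial K) - Polynomial.C a) = 0 :=
    Polynomial.eq_zero_of_dvd_of_degree_lt h1 (by
      rw [degree_X_pow]
      refine lt_of_le_of_lt (degree_sub_le _ _) ?_
      refine max_lt (by simp [degree_X]) (degree_C_le.trans_lt (by norm_num)))
  have := congrArg (fun p => Polynomial.coeff p 1) h0
  simp at this

lemma finrank_Q3 : Module.finrank K Q3 = 3 := by
  have h : ((X : Polynomial K) ^ 3) ≠ 0 := pow_ne_zero _ X_ne_zero
  rw [(AdjoinRoot.powerBasis h).finrank]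
  simp [AdjoinRoot.powerBasis]

/-- Decomposition of elements of `K[t]/(t³)`. -/
lemma Q3_decomp (z : Q3) : ∃ a b c : K,
    z = algebraMap K Q3 a + algebraMap K Q3 b * AdjoinRoot.root _ +
      algebraMap K Q3 c * (AdjoinRoot.root _) ^ 2 := by
  obtain ⟨p, rfl⟩ := AdjoinRoot.mk_surjective z
  set t := AdjoinRoot.root ((X : Polynomial K) ^ 3) with ht
  have hmonic : ((X : Polynomial K) ^ 3).Monic := monic_X_pow 3
  set r := p %ₘ ((X : Polynomial K) ^ 3) with hr
  have hdeg : r.natDegree < 3 := by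
    have h2 := natDegree_modByMonic_lt p hmonic (by
      intro h; have := congrArg natDegree h; simp at this)
    simpa using h2
  have hsplit : r + ((X : Polynomial K) ^ 3) * (p /ₘ ((X : Polynomial K) ^ 3)) = p :=
    modByMonic_add_div p ((X : Polynomial K) ^ 3)
  have hz : AdjoinRoot.mk ((X : Polynomial K) ^ 3) p = Polynomial.aeval t r := by
    rw [← AdjoinRoot.aeval_eq, ← hsplit, map_add, map_mul, map_pow, Polynomial.aeval_X,
      ← ht, root3_pow, zero_mul, add_zero]
  rw [hz, Polynomial.aeval_eq_sum_range' hdeg]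
  refine ⟨r.coeff 0, r.coeff 1, r.coeff 2, ?_⟩
  rw [Finset.sum_range_succ, Finset.sum_range_succ, Finset.sum_range_one]
  simp [Algebra.smul_def]

/-- Evaluation at `0`, `K[t]/(t³) → K`. -/
def epsQ3 : Q3 →ₐ[K] K :=
  AdjoinRoot.liftAlgHom _ (Algebra.ofId K _) 0 (by simp)

@[simp] lemma epsQ3_root : (epsQ3 : Q3 →ₐ[K] K) (AdjoinRoot.root _) = 0 := by
  unfold epsQ3; apply AdjoinRoot.liftAlgHom_root

/-- The quotient map `K[t]/(t³) → K[s]/(s²)`. -/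
def q32 : Q3 →ₐ[K] Q2 :=
  AdjoinRoot.liftAlgHom _ (Algebra.ofId K _) (AdjoinRoot.root _) (by
    have h : (AdjoinRoot.root ((X : Polynomial K) ^ 2)) ^ 3 = 0 := by
      rw [pow_succ (AdjoinRoot.root _) 2, root2_pow, zero_mul]
    rw [Polynomial.eval₂_X_pow]
    exact h)

@[simp] lemma q32_root : (q32 : Q3 →ₐ[K] Q2) (AdjoinRoot.root _) = AdjoinRoot.root ((X : Polynomial K) ^ 2) := by
  unfold q32; apply AdjoinRoot.liftAlgHom_root

lemma q32_surjective : Function.Surjective (q32 : Q3 →ₐ[K] Q2) := by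
  intro z
  obtain ⟨p, rfl⟩ := AdjoinRoot.mk_surjective z
  refine ⟨AdjoinRoot.mk _ p, ?_⟩
  rw [← AdjoinRoot.aeval_eq, ← AdjoinRoot.aeval_eq, ← Polynomial.aeval_algHom_apply, q32_root]

/-! ### The algebra map `K[x,y] → K[t]/(t³)`, `x ↦ t`, `y ↦ -l t²` -/

def toQ3 (l : K) : MvPolynomial (Fin 2) K →ₐ[K] Q3 :=
  MvPolynomial.aeval ![AdjoinRoot.root _, algebraMap K Q3 (-l) * (AdjoinRoot.root _) ^ 2]

@[simp] lemma toQ3_X0 (l : K) : toQ3 l (Xv 0) = AdjoinRoot.root _ := by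
  simp [toQ3]

@[simp] lemma toQ3_X1 (l : K) :
    toQ3 l (Xv 1) = algebraMap K Q3 (-l) * (AdjoinRoot.root _) ^ 2 := by
  simp [toQ3]

lemma toQ3_vanish (l : K) : ∀ p ∈ cuspIdeal K l, toQ3 l p = 0 := by
  intro p hp
  have hle : cuspIdeal K l ≤ RingHom.ker (toQ3 l) := by
    rw [cuspIdeal, Ideal.span_le]
    rintro g (rfl | rfl)
    · simp only [SetLike.mem_coe, RingHom.mem_ker, map_add, map_mul, map_pow,
        toQ3_X0, toQ3_X1]
      rw [show (toQ3 l) (Cv l) = algebraMap K Q3 l from by simp [toQ3]]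
      rw [map_neg]
      ring
    · simp only [SetLike.mem_coe, RingHom.mem_ker, map_pow, toQ3_X0]
      exact root3_pow
  exact hle hp

/-- `liftₐ` applied to `mk`. -/
lemma liftQ_mk (l : K) (p : MvPolynomial (Fin 2) K) :
    (Ideal.Quotient.liftₐ (cuspIdeal K l) (toQ3 l) (toQ3_vanish l))
      (Ideal.Quotient.mk (cuspIdeal K l) p) = toQ3 l p := by
  rw [Ideal.Quotient.liftₐ_apply]
  rfl

lemma mkq_y (l : K) :
    Ideal.Quotient.mk (cuspIdeal K l) (Xv 1)
      + algebraMap K _ l * (Ideal.Quotient.mk (cuspIdeal K l) (Xv 0)) ^ 2 = 0 := by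
  have h1 : algebraMap K (MvPolynomial (Fin 2) K ⧸ cuspIdeal K l) l
      * (Ideal.Quotient.mk (cuspIdeal K l) (Xv 0)) ^ 2
      = Ideal.Quotient.mk (cuspIdeal K l) (Cv l * Xv 0 ^ 2) := by
    rw [map_mul, map_pow]
    rfl
  rw [h1, ← map_add]
  exact Ideal.Quotient.eq_zero_iff_mem.mpr (gen1_mem l)

/-- The isomorphism `K[x,y]/(y + l x², x³) ≃ K[t]/(t³)`. -/
def cuspEquiv (l : K) : (MvPolynomial (Fin 2) K ⧸ cuspIdeal K l) ≃ₐ[K] Q3 := by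
  have hx3 : (Ideal.Quotient.mk (cuspIdeal K l) (Xv 0)) ^ 3 = 0 := by
    rw [← map_pow]
    exact (Ideal.Quotient.eq_zero_iff_mem).mpr (gen2_mem l)
  refine AlgEquiv.ofAlgHom
    (Ideal.Quotient.liftₐ (cuspIdeal K l) (toQ3 l) (toQ3_vanish l))
    (AdjoinRoot.liftAlgHom _ (Algebra.ofId K _) (Ideal.Quotient.mk (cuspIdeal K l) (Xv 0)) (by
      rw [Polynomial.eval₂_X_pow]; exact hx3))
    ?_ ?_
  · apply AdjoinRoot.algHom_ext
    simp only [AlgHom.coe_comp, Function.comp_apply, AlgHom.coe_id, id_eq]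
    rw [AdjoinRoot.liftAlgHom_root, liftQ_mk, toQ3_X0]
  · apply Ideal.Quotient.algHom_ext
    apply MvPolynomial.algHom_ext
    intro i
    simp only [AlgHom.coe_comp, Function.comp_apply, Ideal.Quotient.mkₐ_eq_mk,
      AlgHom.coe_id, id_eq]
    rw [liftQ_mk]
    fin_cases i <;> simp only [Fin.isValue, Fin.zero_eta, Fin.mk_one]
    · rw [toQ3_X0, AdjoinRoot.liftAlgHom_root]
    · rw [toQ3_X1, map_mul, AlgHom.commutes]
      simp only [map_pow, AdjoinRoot.liftAlgHom_root, map_neg]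
      linear_combination -mkq_y l

lemma finrank_cuspQuot (l : K) :
    Module.finrank K (MvPolynomial (Fin 2) K ⧸ cuspIdeal K l) = 3 := by
  rw [(cuspEquiv l).toLinearEquiv.finrank_eq]
  exact finrank_Q3

/-! ### The ideal `(x, y)` -/

lemma mem_spanX01 (p : MvPolynomial (Fin 2) K) :
    p ∈ Ideal.span {(Xv 0 : MvPolynomial (Fin 2) K), Xv 1} ↔
      MvPolynomial.constantCoeff p = 0 := by
  have himg : ({Xv 0, Xv 1} : Set (MvPolynomial (Fin 2) K)) =
      MvPolynomial.X '' Set.univ := by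
    ext g
    simp only [Set.mem_insert_iff, Set.mem_singleton_iff, Set.image_univ, Set.mem_range]
    constructor
    · rintro (rfl | rfl)
      exacts [⟨0, rfl⟩, ⟨1, rfl⟩]
    · rintro ⟨i, rfl⟩
      fin_cases i
      · exact Or.inl rfl
      · exact Or.inr rfl
  rw [himg, MvPolynomial.mem_ideal_span_X_image, MvPolynomial.constantCoeff_eq]
  constructor
  · intro h
    by_contra hc
    obtain ⟨i, _, hne⟩ := h 0 (MvPolynomial.mem_support_iff.mpr hc)
    simp at hne
  · intro h m hm
    by_contra hc
    push_neg at hc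
    have hm0 : m = 0 := Finsupp.ext fun i => by simpa using hc i (Set.mem_univ i)
    rw [hm0, MvPolynomial.mem_support_iff] at hm
    exact hm h

lemma spanX01_prime : (Ideal.span {(Xv 0 : MvPolynomial (Fin 2) K), Xv 1}).IsPrime := by
  constructor
  · intro h
    have h1 := (mem_spanX01 (1 : MvPolynomial (Fin 2) K)).mp (h ▸ Submodule.mem_top)
    simp at h1
  · intro a b hab
    rw [mem_spanX01, map_mul, mul_eq_zero] at hab
    rcases hab with h | h
    · exact Or.inl ((mem_spanX01 a).mpr h)
    · exact Or.inr ((mem_spanX01 b).mpr h)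

lemma radical_cuspIdeal (l : K) :
    (cuspIdeal K l).radical = Ideal.span {(Xv 0 : MvPolynomial (Fin 2) K), Xv 1} := by
  have hx : (Xv 0 : MvPolynomial (Fin 2) K) ∈ (cuspIdeal K l).radical := ⟨3, gen2_mem l⟩
  apply le_antisymm
  · rw [spanX01_prime.radical_le_iff, cuspIdeal, Ideal.span_le]
    rintro g (rfl | rfl)
    · exact (mem_spanX01 _).mpr (by simp)
    · exact (mem_spanX01 _).mpr (by simp)
  · rw [Ideal.span_le]
    rintro g (rfl | rfl)
    · exact hx
    · have h1 : (Xv 1 + Cv l * Xv 0 ^ 2 : MvPolynomial (Fin 2) K) ∈ (cuspIdeal K l).radical :=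
        Ideal.le_radical (gen1_mem l)
      have h2 : (Cv l * Xv 0 ^ 2 : MvPolynomial (Fin 2) K) ∈ (cuspIdeal K l).radical := by
        have h3 := Ideal.mul_mem_left _ (Cv l * Xv 0) hx
        have heq : Cv l * Xv 0 * Xv 0 = (Cv l * Xv 0 ^ 2 : MvPolynomial (Fin 2) K) := by ring
        rwa [heq] at h3
      have h4 := Ideal.sub_mem _ h1 h2
      simpa using h4

/-! ### Computation lemmas in `K[t]/(t³)` -/

lemma sq_decomp (b c : K) :
    (algebraMap K Q3 b * AdjoinRoot.root _ +
        algebraMap K Q3 c * (AdjoinRoot.root _) ^ 2) ^ 2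
      = (algebraMap K Q3 b) ^ 2 * (AdjoinRoot.root ((X : Polynomial K) ^ 3)) ^ 2 := by
  have h3 : (AdjoinRoot.root ((X : Polynomial K) ^ 3)) ^ 3 = 0 := root3_pow
  linear_combination (2 * algebraMap K Q3 b * algebraMap K Q3 c +
    (algebraMap K Q3 c) ^ 2 * AdjoinRoot.root ((X : Polynomial K) ^ 3)) * h3

lemma cube_decomp (b c : K) :
    (algebraMap K Q3 b * AdjoinRoot.root _ +
        algebraMap K Q3 c * (AdjoinRoot.root _) ^ 2) ^ 3 = 0 := by
  have h3 : (AdjoinRoot.root ((X : Polynomial K) ^ 3)) ^ 3 = 0 := root3_pow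
  linear_combination ((algebraMap K Q3 b + algebraMap K Q3 c *
    AdjoinRoot.root ((X : Polynomial K) ^ 3)) ^ 3) * h3

end ChilbAux

set_option maxHeartbeats 1600000 in
/-- for the cusp `C = {y² = x³}`, an ideal `J ⊆ K[x,y]` satisfies
`y² − x³ ∈ J`, `√J = (x,y)`, `dim_K K[x,y]/J = 3` and `K[x,y]/J ≅ K[t]/(t³)` as
`K`-algebras iff `J = (y + λx², x³)` for some `λ ∈ K`. -/
theorem chilb_three_of_cusp
    (K : Type*) [Field K] [IsAlgClosed K] [CharZero K] :
    ∀ J : Ideal (MvPolynomial (Fin 2) K),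
      (MvPolynomial.X 1 ^ 2 - MvPolynomial.X 0 ^ 3 ∈ J ∧
        J.radical = Ideal.span {MvPolynomial.X 0, MvPolynomial.X 1} ∧
        Module.finrank K (MvPolynomial (Fin 2) K ⧸ J) = 3 ∧
        Nonempty ((MvPolynomial (Fin 2) K ⧸ J) ≃ₐ[K]
          (Polynomial K ⧸ Ideal.span {(Polynomial.X : Polynomial K) ^ 3}))) ↔
      ∃ l : K, J = Ideal.span
        {MvPolynomial.X 1 + MvPolynomial.C l * MvPolynomial.X 0 ^ 2,
          MvPolynomial.X 0 ^ 3} := by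
  intro J
  constructor
  · rintro ⟨hf, hrad, hdim, ⟨e⟩⟩
    replace e : (MvPolynomial (Fin 2) K ⧸ J) ≃ₐ[K] AdjoinRoot ((Polynomial.X : Polynomial K) ^ 3) := e
    classical
    set t := AdjoinRoot.root ((Polynomial.X : Polynomial K) ^ 3) with ht
    -- J is a proper ideal
    have hJne : (1 : MvPolynomial (Fin 2) K) ∉ J := by
      intro h1
      have h2 : (1 : MvPolynomial (Fin 2) K) ∈ J.radical := Ideal.le_radical h1
      rw [hrad, mem_spanX01] at h2
      simp at h2
    -- decompositions of the images of x and y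
    obtain ⟨a, b, c, hxd⟩ := Q3_decomp (e (Ideal.Quotient.mk J (MvPolynomial.X 0)))
    obtain ⟨a', b', c', hyd⟩ := Q3_decomp (e (Ideal.Quotient.mk J (MvPolynomial.X 1)))
    -- constant terms vanish since x, y are nilpotent mod J
    have hconst : ∀ i : Fin 2, epsQ3 (e (Ideal.Quotient.mk J (MvPolynomial.X i))) = 0 := by
      intro i
      have hXi : (MvPolynomial.X i : MvPolynomial (Fin 2) K) ∈ J.radical := by
        rw [hrad]
        refine Ideal.subset_span ?_
        fin_cases i <;> simp
      obtain ⟨n, hn⟩ := hXi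
      have hn0 : n ≠ 0 := by
        rintro rfl
        rw [pow_zero] at hn
        exact hJne hn
      have hz : (epsQ3 (e (Ideal.Quotient.mk J (MvPolynomial.X i)))) ^ n = 0 := by
        have e1 : e ((Ideal.Quotient.mk J (MvPolynomial.X i)) ^ n)
            = (e (Ideal.Quotient.mk J (MvPolynomial.X i))) ^ n := map_pow e _ n
        have e2 : epsQ3 ((e (Ideal.Quotient.mk J (MvPolynomial.X i))) ^ n)
            = (epsQ3 (e (Ideal.Quotient.mk J (MvPolynomial.X i)))) ^ n := map_pow _ _ n
        rw [← e2, ← e1, ← map_pow, Ideal.Quotient.eq_zero_iff_mem.mpr hn,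
          map_zero, map_zero]
      exact pow_eq_zero_iff hn0 |>.mp hz
    have ha : a = 0 := by
      have h0 := hconst 0
      rw [hxd, map_add, map_add, map_mul, map_mul, map_pow, epsQ3_root,
        AlgHom.commutes] at h0
      simpa using h0
    have ha' : a' = 0 := by
      have h0 := hconst 1
      rw [hyd, map_add, map_add, map_mul, map_mul, map_pow, epsQ3_root,
        AlgHom.commutes] at h0
      simpa using h0
    rw [ha, map_zero, zero_add] at hxd
    rw [ha', map_zero, zero_add] at hyd
    -- the cusp relation
    have hrel : (e (Ideal.Quotient.mk J (MvPolynomial.X 1))) ^ 2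
        = (e (Ideal.Quotient.mk J (MvPolynomial.X 0))) ^ 3 := by
      rw [← map_pow, ← map_pow, ← map_pow, ← map_pow]
      congr 1
      rw [← sub_eq_zero, ← map_sub]
      exact Ideal.Quotient.eq_zero_iff_mem.mpr hf
    -- b' = 0
    have hb' : b' = 0 := by
      rw [hxd, hyd, sq_decomp, cube_decomp] at hrel
      rw [← map_pow, ← Algebra.smul_def] at hrel
      rcases smul_eq_zero.mp hrel with h | h
      · exact pow_eq_zero_iff (by norm_num : (2:ℕ) ≠ 0) |>.mp h
      · exact absurd h root3_sq_ne
    rw [hb', map_zero, zero_mul, zero_add] at hyd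
    -- b ≠ 0
    have hb : b ≠ 0 := by
      intro hb0
      rw [hb0, map_zero, zero_mul, zero_add] at hxd
      set μ := ((q32 : _ →ₐ[K] _).comp e.toAlgHom).comp (Ideal.Quotient.mkₐ K J)
        with hμ
      have hμs : Function.Surjective μ := by
        refine q32_surjective.comp (e.surjective.comp ?_)
        exact Ideal.Quotient.mkₐ_surjective K J
      have hμ0 : ∀ i : Fin 2, μ (MvPolynomial.X i) = 0 := by
        intro i
        fin_cases i
        · show q32 (e (Ideal.Quotient.mkₐ K J (MvPolynomial.X 0))) = 0
          rw [Ideal.Quotient.mkₐ_eq_mk, hxd]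
          rw [map_mul, map_pow, AlgHom.commutes, q32_root, root2_pow, mul_zero]
        · show q32 (e (Ideal.Quotient.mkₐ K J (MvPolynomial.X 1))) = 0
          rw [Ideal.Quotient.mkₐ_eq_mk, hyd]
          rw [map_mul, map_pow, AlgHom.commutes, q32_root, root2_pow, mul_zero]
      have hagree : μ = MvPolynomial.aeval
          (0 : Fin 2 → AdjoinRoot ((Polynomial.X : Polynomial K) ^ 2)) := by
        apply MvPolynomial.algHom_ext
        intro i
        rw [hμ0 i, MvPolynomial.aeval_X, Pi.zero_apply]
      obtain ⟨p, hp⟩ := hμs (AdjoinRoot.root ((Polynomial.X : Polynomial K) ^ 2))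
      rw [hagree, MvPolynomial.aeval_zero] at hp
      exact root2_not_scalar _ hp.symm
    -- the parameter
    refine ⟨-c' / b ^ 2, ?_⟩
    have key : algebraMap K (AdjoinRoot ((Polynomial.X : Polynomial K) ^ 3)) (-c' / b ^ 2)
        * (algebraMap K (AdjoinRoot ((Polynomial.X : Polynomial K) ^ 3)) b) ^ 2
        = - algebraMap K (AdjoinRoot ((Polynomial.X : Polynomial K) ^ 3)) c' := by
      rw [← map_pow, ← map_mul, ← map_neg]
      congr 1
      field_simp
    have hyJ : MvPolynomial.X 1 + MvPolynomial.C (-c' / b ^ 2) * MvPolynomial.X 0 ^ 2 ∈ J := by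
      rw [← Ideal.Quotient.eq_zero_iff_mem]
      apply e.injective
      have hmk : Ideal.Quotient.mk J
          (MvPolynomial.X 1 + MvPolynomial.C (-c' / b ^ 2) * MvPolynomial.X 0 ^ 2)
          = Ideal.Quotient.mk J (MvPolynomial.X 1)
            + Ideal.Quotient.mk J (MvPolynomial.C (-c' / b ^ 2))
              * (Ideal.Quotient.mk J (MvPolynomial.X 0)) ^ 2 := by
        rw [map_add, map_mul, map_pow]
      have hC : e (Ideal.Quotient.mk J (MvPolynomial.C (-c' / b ^ 2)))
          = algebraMap K (AdjoinRoot ((Polynomial.X : Polynomial K) ^ 3)) (-c' / b ^ 2) := by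
        rw [show (Ideal.Quotient.mk J) (MvPolynomial.C (-c' / b ^ 2))
          = algebraMap K _ (-c' / b ^ 2) from rfl]
        exact e.commutes _
      have h2 : e ((Ideal.Quotient.mk J (MvPolynomial.X 0)) ^ 2)
          = (algebraMap K _ b) ^ 2
            * (AdjoinRoot.root ((Polynomial.X : Polynomial K) ^ 3)) ^ 2 := by
        rw [map_pow, hxd, sq_decomp]
      rw [hmk, map_add, map_mul, map_zero, hC, h2, hyd]
      linear_combination (AdjoinRoot.root ((Polynomial.X : Polynomial K) ^ 3)) ^ 2 * key
    have hx3J : (MvPolynomial.X 0 : MvPolynomial (Fin 2) K) ^ 3 ∈ J := by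
      rw [← Ideal.Quotient.eq_zero_iff_mem]
      apply e.injective
      rw [map_zero, map_pow, map_pow, hxd, cube_decomp]
    have hle : cuspIdeal K (-c' / b ^ 2) ≤ J := by
      rw [cuspIdeal, Ideal.span_le]
      rintro g (rfl | rfl)
      · exact hyJ
      · exact hx3J
    have hfd1 : FiniteDimensional K (MvPolynomial (Fin 2) K ⧸ cuspIdeal K (-c' / b ^ 2)) :=
      FiniteDimensional.of_finrank_pos (by rw [finrank_cuspQuot]; norm_num)
    have hfd2 : FiniteDimensional K (MvPolynomial (Fin 2) K ⧸ J) :=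
      FiniteDimensional.of_finrank_pos (by rw [hdim]; norm_num)
    have hcomap : cuspIdeal K (-c' / b ^ 2)
        ≤ Ideal.comap (AlgHom.id K (MvPolynomial (Fin 2) K)) J := by
      rw [show Ideal.comap (AlgHom.id K (MvPolynomial (Fin 2) K)) J = J from rfl]
      exact hle
    set π := Ideal.quotientMapₐ J (AlgHom.id K (MvPolynomial (Fin 2) K)) hcomap with hπ
    have hπs : Function.Surjective π := by
      intro z
      obtain ⟨p, rfl⟩ := Ideal.Quotient.mk_surjective z
      exact ⟨Ideal.Quotient.mk _ p, by simp [hπ, Ideal.quotientMapₐ, Ideal.quotientMap_mk]⟩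
    have hinj : Function.Injective π.toLinearMap :=
      (LinearMap.injective_iff_surjective_of_finrank_eq_finrank
        (by rw [finrank_cuspQuot, hdim])).mpr hπs
    have hJle : J ≤ cuspIdeal K (-c' / b ^ 2) := by
      intro p hp
      have h0 : π (Ideal.Quotient.mk (cuspIdeal K (-c' / b ^ 2)) p) = 0 := by
        simp only [hπ, Ideal.quotientMapₐ, AlgHom.coe_mk, Ideal.quotientMap_mk,
          AlgHom.coe_id, id_eq]
        exact Ideal.Quotient.eq_zero_iff_mem.mpr hp
      have h1 : π.toLinearMap (Ideal.Quotient.mk (cuspIdeal K (-c' / b ^ 2)) p)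
          = π.toLinearMap 0 := by
        rw [AlgHom.toLinearMap_apply, AlgHom.toLinearMap_apply, map_zero]
        exact h0
      have h2 := hinj h1
      exact Ideal.Quotient.eq_zero_iff_mem.mp h2
    exact le_antisymm hJle hle
  · rintro ⟨l, rfl⟩
    exact ⟨cusp_mem l, radical_cuspIdeal l, finrank_cuspQuot l, ⟨cuspEquiv l⟩⟩
end

section
/- Let K be an algebraically closed field of characteristic zero, let k ≥ 1, and consider the plane curve singularity f = x² − y^{2k+1} ∈ K[x,y]. For every integer m > 2k + 1 there is no surjective K-algebra homomorphism φ : K[x,y] → K[t]/(t^m) with φ(x) ∈ (t̄), φ(y) ∈ (t̄) and φ(x² − y^{2k+1}) = 0. Equivalently, the curvilinear Hilbert scheme CHilb^m₀(C) of the curve C = {x² = y^{2k+1}} is empty for all m > 2k + 1. (This realizes the stabilization-to-empty threshold N = 2k + 1 of the theorem on curves with no smooth branches for this family; the case k = 1 is the cusp, for which CHilb^m₀(C) = ∅ for all m ≥ 4.) -/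
/-- for the curve `C = {x² = y^{2k+1}}` and every `m > 2k + 1`, there is
no surjective `K`-algebra homomorphism `φ : K[x,y] → K[t]/(t^m)` with
`φ(x), φ(y) ∈ (t̄)` and `φ(x² − y^{2k+1}) = 0`; i.e. `CHilb^m₀(C) = ∅` for `m > 2k+1`. -/
theorem chilb_empty_above_threshold
    (K : Type*) [Field K] [IsAlgClosed K] [CharZero K]
    (k : ℕ) (hk : 1 ≤ k) (m : ℕ) (hm : 2 * k + 1 < m) :
    ¬ ∃ φ : MvPolynomial (Fin 2) K →ₐ[K]
        (Polynomial K ⧸ Ideal.span {(Polynomial.X : Polynomial K) ^ m}),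
      Function.Surjective φ ∧
      φ (MvPolynomial.X 0) ∈
        Ideal.span {Ideal.Quotient.mk (Ideal.span {(Polynomial.X : Polynomial K) ^ m})
          Polynomial.X} ∧
      φ (MvPolynomial.X 1) ∈
        Ideal.span {Ideal.Quotient.mk (Ideal.span {(Polynomial.X : Polynomial K) ^ m})
          Polynomial.X} ∧
      φ (MvPolynomial.X 0 ^ 2 - MvPolynomial.X 1 ^ (2 * k + 1)) = 0 := by
  rintro ⟨φ, hsurj, hx, hy, hf⟩
  have hI : (Ideal.span {(Polynomial.X : Polynomial K) ^ m} : Ideal (Polynomial K)) =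
      Ideal.span {(Polynomial.X : Polynomial K) ^ m} := rfl
  -- extract lifts A = X*A₁, B = X*B₁
  rw [Ideal.mem_span_singleton] at hx hy
  obtain ⟨a, ha⟩ := hx
  obtain ⟨b, hb⟩ := hy
  obtain ⟨A₁, hA₁⟩ := Ideal.Quotient.mk_surjective a
  obtain ⟨B₁, hB₁⟩ := Ideal.Quotient.mk_surjective b
  set A : Polynomial K := Polynomial.X * A₁ with hA
  set B : Polynomial K := Polynomial.X * B₁ with hB
  have hmkA : Ideal.Quotient.mk (Ideal.span {(Polynomial.X : Polynomial K) ^ m}) A = φ (MvPolynomial.X 0) := by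
    rw [ha, ← hA₁, hA, map_mul]
  have hmkB : Ideal.Quotient.mk (Ideal.span {(Polynomial.X : Polynomial K) ^ m}) B = φ (MvPolynomial.X 1) := by
    rw [hb, ← hB₁, hB, map_mul]
  -- φ factors through aeval ![A, B]
  set Φ : MvPolynomial (Fin 2) K →ₐ[K] Polynomial K := MvPolynomial.aeval ![A, B] with hΦ
  have hfac : (Ideal.Quotient.mkₐ K (Ideal.span {(Polynomial.X : Polynomial K) ^ m})).comp Φ = φ := by
    rw [hΦ, MvPolynomial.comp_aeval, MvPolynomial.aeval_unique φ]
    apply MvPolynomial.algHom_ext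
    intro i
    fin_cases i <;> simp [hmkA, hmkB, Ideal.Quotient.mkₐ_eq_mk]
  have hfac' : ∀ p, φ p = Ideal.Quotient.mk (Ideal.span {(Polynomial.X : Polynomial K) ^ m}) (Φ p) := by
    intro p
    rw [← hfac]
    rfl
  -- the curve equation for the lifts
  have hΦf : Φ (MvPolynomial.X 0 ^ 2 - MvPolynomial.X 1 ^ (2 * k + 1))
      = A ^ 2 - B ^ (2 * k + 1) := by
    simp [hΦ]
  have hcurve : (Polynomial.X : Polynomial K) ^ m ∣ A ^ 2 - B ^ (2 * k + 1) := by
    rw [← Ideal.mem_span_singleton, ← Ideal.Quotient.eq_zero_iff_mem, ← hΦf,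
      ← hfac' _]
    exact hf
  -- surjectivity: some q with X ≡ Φ q mod X^m
  obtain ⟨q, hq⟩ := hsurj (Ideal.Quotient.mk (Ideal.span {(Polynomial.X : Polynomial K) ^ m}) Polynomial.X)
  have hqX : (Polynomial.X : Polynomial K) ^ m ∣ Φ q - Polynomial.X := by
    rw [← Ideal.mem_span_singleton, ← Ideal.Quotient.eq]
    rw [hfac' q] at hq
    exact hq
  have hm2 : 2 ≤ m := by omega
  have hq2 : (Polynomial.X : Polynomial K) ^ 2 ∣ Φ q - Polynomial.X :=
    dvd_trans (pow_dvd_pow _ hm2) hqX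
  -- key: not both A and B are divisible by X^2
  have hkey : ¬ ((Polynomial.X : Polynomial K) ^ 2 ∣ A ∧ (Polynomial.X : Polynomial K) ^ 2 ∣ B) := by
    rintro ⟨h2A, h2B⟩
    set J : Ideal (Polynomial K) := Ideal.span {(Polynomial.X : Polynomial K) ^ 2} with hJ
    set mk₂ : Polynomial K →ₐ[K] Polynomial K ⧸ J := Ideal.Quotient.mkₐ K J with hmk₂
    have hAz : mk₂ A = 0 := by
      rw [hmk₂, Ideal.Quotient.mkₐ_eq_mk, Ideal.Quotient.eq_zero_iff_mem,
        Ideal.mem_span_singleton]; exact h2A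
    have hBz : mk₂ B = 0 := by
      rw [hmk₂, Ideal.Quotient.mkₐ_eq_mk, Ideal.Quotient.eq_zero_iff_mem,
        Ideal.mem_span_singleton]; exact h2B
    have hcomp : mk₂.comp Φ = MvPolynomial.aeval 0 := by
      rw [hΦ, MvPolynomial.comp_aeval]
      apply MvPolynomial.algHom_ext
      intro i
      fin_cases i <;> simp [hAz, hBz]
    have hq0 : mk₂ (Φ q) = algebraMap K _ (MvPolynomial.constantCoeff q) := by
      have := congrArg (fun ψ => ψ q) hcomp
      simpa [MvPolynomial.aeval_zero] using this
    have hXC : mk₂ Polynomial.X = mk₂ (Polynomial.C (MvPolynomial.constantCoeff q)) := by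
      have h1 : mk₂ (Φ q) = mk₂ Polynomial.X := by
        rw [hmk₂, Ideal.Quotient.mkₐ_eq_mk, Ideal.Quotient.eq]
        rw [Ideal.mem_span_singleton]
        exact hq2
      rw [← h1, hq0, hmk₂, Ideal.Quotient.mkₐ_eq_mk]
      rfl
    have hdvd : (Polynomial.X : Polynomial K) ^ 2 ∣
        Polynomial.X - Polynomial.C (MvPolynomial.constantCoeff q) := by
      rw [hmk₂, Ideal.Quotient.mkₐ_eq_mk, Ideal.Quotient.eq,
        Ideal.mem_span_singleton] at hXC
      exact hXC
    have hne : (Polynomial.X : Polynomial K) - Polynomial.C (MvPolynomial.constantCoeff q) ≠ 0 :=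
      Polynomial.X_sub_C_ne_zero _
    have := Polynomial.natDegree_le_of_dvd hdvd hne
    rw [Polynomial.natDegree_X_pow, Polynomial.natDegree_X_sub_C] at this
    omega
  -- helper: X^(2k+2) ∣ B^(2k+1) forces X² ∣ B
  have hBhelp : (Polynomial.X : Polynomial K) ^ (2 * k + 2) ∣ B ^ (2 * k + 1) →
      (Polynomial.X : Polynomial K) ^ 2 ∣ B := by
    intro h
    have hB' : B ^ (2 * k + 1) = Polynomial.X ^ (2 * k + 1) * B₁ ^ (2 * k + 1) := by
      rw [hB, mul_pow]
    rw [hB', pow_succ] at h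
    have hXne : (Polynomial.X : Polynomial K) ^ (2 * k + 1) ≠ 0 :=
      pow_ne_zero _ Polynomial.X_ne_zero
    have hdvd1 : (Polynomial.X : Polynomial K) ∣ B₁ ^ (2 * k + 1) :=
      (mul_dvd_mul_iff_left hXne).mp h
    have hdvdB₁ : (Polynomial.X : Polynomial K) ∣ B₁ :=
      Polynomial.prime_X.dvd_of_dvd_pow hdvd1
    obtain ⟨c, hc⟩ := hdvdB₁
    rw [hB, hc, ← mul_assoc, ← sq]
    exact Dvd.intro c rfl
  have h2k2 : (Polynomial.X : Polynomial K) ^ (2 * k + 2) ∣ A ^ 2 - B ^ (2 * k + 1) :=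
    dvd_trans (pow_dvd_pow _ (by omega)) hcurve
  apply hkey
  constructor
  · -- show X² ∣ A
    by_contra h2A
    -- then A = X A₁ with X ∤ A₁, so ord A² = 2, but B^(2k+1) ∈ (X³) and m ≥ 3
    have hA₁nd : ¬ (Polynomial.X : Polynomial K) ∣ A₁ := by
      intro ⟨c, hc⟩
      exact h2A (by rw [hA, hc, ← mul_assoc, ← sq]; exact Dvd.intro c rfl)
    have h3B : (Polynomial.X : Polynomial K) ^ 3 ∣ B ^ (2 * k + 1) := by
      have : (Polynomial.X : Polynomial K) ^ (2 * k + 1) ∣ B ^ (2 * k + 1) := by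
        rw [hB, mul_pow]; exact Dvd.intro _ rfl
      exact dvd_trans (pow_dvd_pow _ (by omega)) this
    have h3A : (Polynomial.X : Polynomial K) ^ 3 ∣ A ^ 2 := by
      have h3diff : (Polynomial.X : Polynomial K) ^ 3 ∣ A ^ 2 - B ^ (2 * k + 1) :=
        dvd_trans (pow_dvd_pow _ (by omega)) h2k2
      have := dvd_add h3diff h3B
      simpa using this
    have hA2 : A ^ 2 = Polynomial.X ^ 2 * A₁ ^ 2 := by rw [hA, mul_pow]
    rw [hA2, show (3 : ℕ) = 2 + 1 from rfl, pow_succ] at h3A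
    have hXne : (Polynomial.X : Polynomial K) ^ 2 ≠ 0 :=
      pow_ne_zero _ Polynomial.X_ne_zero
    have : (Polynomial.X : Polynomial K) ∣ A₁ ^ 2 := (mul_dvd_mul_iff_left hXne).mp h3A
    exact hA₁nd (Polynomial.prime_X.dvd_of_dvd_pow this)
  · -- show X² ∣ B
    by_cases hA0 : A = 0
    · apply hBhelp
      have := h2k2
      rw [hA0] at this
      simpa using this.neg_right
    · -- ord(A²) is even; X^(2k+1) ∣ A², hence X^(2k+2) ∣ A², hence X^(2k+2) ∣ B^(2k+1)
      have hA2ne : A * A ≠ 0 := mul_ne_zero hA0 hA0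
      have hXB : (Polynomial.X : Polynomial K) ^ (2 * k + 1) ∣ B ^ (2 * k + 1) := by
        rw [hB, mul_pow]; exact Dvd.intro _ rfl
      have hXA2 : (Polynomial.X : Polynomial K) ^ (2 * k + 1) ∣ A ^ 2 := by
        have hdiff : (Polynomial.X : Polynomial K) ^ (2 * k + 1) ∣ A ^ 2 - B ^ (2 * k + 1) :=
          dvd_trans (pow_dvd_pow _ (by omega)) h2k2
        have := dvd_add hdiff hXB
        simpa using this
      have hrm : 2 * k + 1 ≤ Polynomial.rootMultiplicity 0 (A * A) := by
        rw [Polynomial.le_rootMultiplicity_iff hA2ne]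
        simpa [sq] using hXA2
      rw [Polynomial.rootMultiplicity_mul hA2ne] at hrm
      have hrm2 : 2 * k + 2 ≤ Polynomial.rootMultiplicity 0 (A * A) := by
        rw [Polynomial.rootMultiplicity_mul hA2ne]
        omega
      have hXA2' : (Polynomial.X : Polynomial K) ^ (2 * k + 2) ∣ A ^ 2 := by
        have := (Polynomial.le_rootMultiplicity_iff hA2ne).mp hrm2
        simpa [sq] using this
      apply hBhelp
      have := dvd_sub hXA2' h2k2
      simpa using this
end
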